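/- For any vertex x of finite degree, the Dirac mass can be expressed in terms of the energy kernel: δ_x = c(x)·v_x − Σ_{y~x} c_{xy}·v_y as elements of H_E. -/

import Mathlib

noncomputable def energyForm {V : Type*} (c : V → V → ℝ) (u v : V → ℝ) : ℝ :=
  (1/2) * ∑' p : V × V, c p.1 p.2 * (u p.1 - u p.2) * (v p.1 - v p.2)

def FinEnergy {V : Type*} (c : V → V → ℝ) (u : V → ℝ) : Prop :=
  Summable (fun p : V × V => c p.1 p.2 * (u p.1 - u p.2) * (u p.1 - u p.2))

/-!
Pairing `δ_x` against any `u` in the energy form only sees the finitely many edges at `x`, so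
`⟨u, δ_x⟩_E = Σ_{y~x} c_{xy} (u(x) - u(y))`, the Laplacian of `u` at `x`. Taking `u = v_z`, the
reproducing property turns the left side into `δ_x(z) - δ_x(o)`, and the symmetry
`v_z(w) - v_z(o) = v_w(z) - v_w(o)` of the energy kernel rewrites the right side as the value at
`z` of `c(x) v_x - Σ_{y~x} c_{xy} v_y`, up to a constant. Elements of `H_E` are functions modulo
constants, which is why the conclusion carries an additive constant `k`.
-/

section Dirac

variable {V : Type*} [DecidableEq V]

def dirac (x : V) : V → ℝ := Pi.single x 1

variable {c : V → V → ℝ} {x : V} {N : Finset V}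

theorem hasSum_mul_dirac_left (hN : ∀ y ∉ N, c x y = 0) (f : V → V → ℝ) :
    HasSum (fun p : V × V => c p.1 p.2 * f p.1 p.2 * dirac x p.1)
      (∑ y ∈ N, c x y * f x y) := by
  have hsupp : ∀ p ∉ ({x} : Finset V) ×ˢ N,
      c p.1 p.2 * f p.1 p.2 * dirac x p.1 = 0 := by
    rintro ⟨a, b⟩ hp
    by_cases ha : a = x
    · subst ha
      have hb : b ∉ N := by simpa using hp
      simp [dirac, hN b hb]
    · simp [dirac, ha]
  simpa [Finset.sum_product, dirac] using hasSum_sum_of_ne_finset_zero hsupp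

theorem hasSum_mul_dirac_right (hsymm : ∀ a b, c a b = c b a) (hN : ∀ y ∉ N, c x y = 0)
    (f : V → V → ℝ) :
    HasSum (fun p : V × V => c p.1 p.2 * f p.1 p.2 * dirac x p.2)
      (∑ y ∈ N, c x y * f y x) := by
  rw [← (Equiv.prodComm V V).hasSum_iff]
  convert hasSum_mul_dirac_left hN (fun a b => f b a) using 2 with p
  simp [hsymm p.1 p.2]

theorem hasSum_mul_dirac_sub_dirac (hsymm : ∀ a b, c a b = c b a)
    (hN : ∀ y ∉ N, c x y = 0) (f : V → V → ℝ) :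
    HasSum
      (fun p : V × V => c p.1 p.2 * f p.1 p.2 * (dirac x p.1 - dirac x p.2))
      (∑ y ∈ N, c x y * (f x y - f y x)) := by
  have h := (hasSum_mul_dirac_left hN f).sub (hasSum_mul_dirac_right hsymm hN f)
  rw [← Finset.sum_sub_distrib] at h
  simpa only [← mul_sub] using h

theorem finEnergy_dirac (hsymm : ∀ a b, c a b = c b a) (hN : ∀ y ∉ N, c x y = 0) :
    FinEnergy c (dirac x) :=
  (hasSum_mul_dirac_sub_dirac hsymm hN fun a b => dirac x a - dirac x b).summable

theorem energyForm_dirac (hsymm : ∀ a b, c a b = c b a) (hN : ∀ y ∉ N, c x y = 0)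
    (u : V → ℝ) :
    energyForm c u (dirac x) = ∑ y ∈ N, c x y * (u x - u y) := by
  rw [energyForm, (hasSum_mul_dirac_sub_dirac hsymm hN fun a b => u a - u b).tsum_eq,
    Finset.mul_sum]
  exact Finset.sum_congr rfl fun y _ => by ring

end Dirac

theorem energyForm_comm {V : Type*} (c : V → V → ℝ) (u w : V → ℝ) :
    energyForm c u w = energyForm c w u := by
  simp only [energyForm, mul_right_comm _ (u _ - u _)]

theorem energyKernel_symm {V : Type*} {c : V → V → ℝ} {o : V} {v : V → V → ℝ}
    (hfinv : ∀ z, FinEnergy c (v z))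
    (hrep : ∀ (z : V) (u : V → ℝ), FinEnergy c u → energyForm c (v z) u = u z - u o)
    (a b : V) : v a b - v a o = v b a - v b o := by
  rw [← hrep a (v b) (hfinv b), ← hrep b (v a) (hfinv a), energyForm_comm]

theorem dirac_in_terms_of_energy_kernel_general {V : Type*} [DecidableEq V] (c : V → V → ℝ)
    (hsymm : ∀ x y, c x y = c y x) (hnonneg : ∀ x y, 0 ≤ c x y)
    (o x : V) (v : V → V → ℝ)
    (hfinv : ∀ z, FinEnergy c (v z))
    (hrep : ∀ (z : V) (u : V → ℝ), FinEnergy c u → energyForm c (v z) u = u z - u o)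
    (N : Finset V) (hN : ∀ y, y ∈ N ↔ 0 < c x y) :
    ∃ k : ℝ, ∀ z : V, (if z = x then (1:ℝ) else 0)
      = (∑ y ∈ N, c x y) * v x z - (∑ y ∈ N, c x y * v y z) + k := by
  have hN' : ∀ y ∉ N, c x y = 0 := fun y hy =>
    le_antisymm (not_lt.mp fun h => hy ((hN y).2 h)) (hnonneg x y)
  have hδ : ∀ z, dirac x z - dirac x o
      = ∑ y ∈ N, c x y * ((v x z - v x o) - (v y z - v y o)) := fun z => by
    rw [← hrep z _ (finEnergy_dirac hsymm hN'), energyForm_dirac hsymm hN']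
    refine Finset.sum_congr rfl fun y _ => congrArg (c x y * ·) ?_
    linarith [energyKernel_symm hfinv hrep z x, energyKernel_symm hfinv hrep z y]
  refine ⟨dirac x o - ∑ y ∈ N, c x y * (v x o - v y o), fun z => ?_⟩
  have hz := hδ z
  simp only [mul_sub, Finset.sum_sub_distrib, ← Finset.sum_mul, dirac, Pi.single_apply] at hz ⊢
  linarith

/-- For a vertex of finite degree, δ_x = c(x)·v_x − Σ_{y~x} c_{xy} v_y in H_E,
i.e., pointwise up to an additive constant. -/
theorem dirac_in_terms_of_energy_kernel {V : Type*} [DecidableEq V] (c : V → V → ℝ)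
    (hsymm : ∀ x y, c x y = c y x) (hnonneg : ∀ x y, 0 ≤ c x y)
    (hloop : ∀ z, c z z = 0)
    (o x : V) (v : V → V → ℝ)
    (hfinv : ∀ z, FinEnergy c (v z))
    (hrep : ∀ (z : V) (u : V → ℝ), FinEnergy c u → energyForm c (v z) u = u z - u o)
    (N : Finset V) (hN : ∀ y, y ∈ N ↔ 0 < c x y) :
    ∃ k : ℝ, ∀ z : V, (if z = x then (1:ℝ) else 0)
      = (∑ y ∈ N, c x y) * v x z - (∑ y ∈ N, c x y * v y z) + k :=
  dirac_in_terms_of_energy_kernel_general c hsymm hnonneg o x v hfinv hrep N hN
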